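/- arXiv:1201.5976 — 2 statements merged into one kernel-verified Lean document; each statement's English description precedes it below -/
import Mathlib

section
/- Every inner divisor of B_λ := b_λ I_n ∈ H^∞_{M_n}, where b_λ is a single Blaschke factor, is a Blaschke–Potapov factor, i.e., of the form ν(b_λ P + (I − P)) for an orthogonal projection P on ℂⁿ and a constant unitary ν. -/
open MeasureTheory Complex Real InnerProductSpace Submodule

set_option maxHeartbeats 1000000
set_option synthInstance.maxHeartbeats 200000

noncomputable section

namespace BlockToeplitz

instance fact2pi : Fact (0 < 2 * π) := ⟨by positivity⟩

/-- The unit circle, as the additive circle `ℝ / 2πℤ`. -/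
abbrev 𝕋 : Type := AddCircle (2 * π)

/-- Normalized Haar (Lebesgue) measure on the circle. -/
abbrev μ𝕋 : Measure 𝕋 := AddCircle.haarAddCircle

section Pointwise

variable {E F : Type*} [NormedAddCommGroup E] [NormedSpace ℂ E]
  [NormedAddCommGroup F] [NormedSpace ℂ F]

theorem memLp_pointwise {Φ : 𝕋 → (E →L[ℂ] F)} (hm : AEStronglyMeasurable Φ μ𝕋)
    {C : ℝ} (hC : ∀ x, ‖Φ x‖ ≤ C) (f : Lp E 2 μ𝕋) :
    MemLp (fun x => Φ x (f x)) 2 μ𝕋 := by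
  refine MemLp.of_le_mul (c := C) (Lp.memLp f) ?_ ?_
  · exact isBoundedBilinearMap_apply.continuous.comp_aestronglyMeasurable
      (hm.prodMk (Lp.aestronglyMeasurable f))
  · refine Filter.Eventually.of_forall fun x => ?_
    exact (ContinuousLinearMap.le_opNorm _ _).trans
      (mul_le_mul_of_nonneg_right (hC x) (norm_nonneg _))

/-- The operator on `L²` of pointwise application of a uniformly bounded family of
operators (e.g. multiplication by an `L^∞` matrix function). -/
def pointwiseCLM (Φ : 𝕋 → (E →L[ℂ] F)) (hm : AEStronglyMeasurable Φ μ𝕋)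
    {C : ℝ} (hC : ∀ x, ‖Φ x‖ ≤ C) : Lp E 2 μ𝕋 →L[ℂ] Lp F 2 μ𝕋 :=
  LinearMap.mkContinuous
    { toFun := fun f => (memLp_pointwise hm hC f).toLp _
      map_add' := fun f g => by
        rw [← MemLp.toLp_add (memLp_pointwise hm hC f) (memLp_pointwise hm hC g)]
        refine MemLp.toLp_congr _ _ ?_
        filter_upwards [Lp.coeFn_add f g] with x hx
        simp only [hx, Pi.add_apply, map_add]
      map_smul' := fun c f => by
        try dsimp only
        rw [RingHom.id_apply, ← MemLp.toLp_const_smul c (memLp_pointwise hm hC f)]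
        refine MemLp.toLp_congr _ _ ?_
        filter_upwards [Lp.coeFn_smul c f] with x hx
        simp only [hx, Pi.smul_apply, ContinuousLinearMap.map_smul] }
    (max C 0)
    (by
      intro f
      simp only [LinearMap.coe_mk, AddHom.coe_mk]
      rw [Lp.norm_toLp]
      have hb : eLpNorm (fun x => Φ x (f x)) 2 μ𝕋
          ≤ ENNReal.ofReal (max C 0) * eLpNorm (f : 𝕋 → E) 2 μ𝕋 := by
        refine eLpNorm_le_mul_eLpNorm_of_ae_le_mul ?_ 2
        refine Filter.Eventually.of_forall fun x => ?_
        exact (ContinuousLinearMap.le_opNorm _ _).trans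
          (mul_le_mul_of_nonneg_right ((hC x).trans (le_max_left _ _)) (norm_nonneg _))
      calc (eLpNorm (fun x => Φ x (f x)) 2 μ𝕋).toReal
          ≤ (ENNReal.ofReal (max C 0) * eLpNorm (f : 𝕋 → E) 2 μ𝕋).toReal := by
            refine ENNReal.toReal_mono ?_ hb
            exact ENNReal.mul_ne_top ENNReal.ofReal_ne_top (Lp.eLpNorm_ne_top f)
        _ = max C 0 * ‖f‖ := by
            rw [ENNReal.toReal_mul, ENNReal.toReal_ofReal (le_max_right C 0), Lp.norm_def])

@[simp] theorem pointwiseCLM_apply (Φ : 𝕋 → (E →L[ℂ] F)) (hm : AEStronglyMeasurable Φ μ𝕋)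
    {C : ℝ} (hC : ∀ x, ‖Φ x‖ ≤ C) (f : Lp E 2 μ𝕋) :
    pointwiseCLM Φ hm hC f = (memLp_pointwise hm hC f).toLp _ := rfl

end Pointwise

end BlockToeplitz

namespace BlockToeplitz
open scoped ComplexConjugate

variable {ι : Type} [Fintype ι]

/-- `ℂ^ι`. -/
abbrev V (ι : Type) [Fintype ι] : Type := EuclideanSpace ℂ ι

/-- The space `L²(𝕋, ℂ^ι)`. -/
abbrev L2 (ι : Type) [Fintype ι] : Type := Lp (V ι) 2 μ𝕋

/-- The vector-valued trigonometric monomial `z^k ⊗ e_i` as an element of `L²`. -/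
def fourierV (ι : Type) [Fintype ι] [DecidableEq ι] (k : ℤ) (i : ι) : L2 ι :=
  (ContinuousMap.toLp (E := V ι) 2 μ𝕋 ℂ)
    ⟨fun x => fourier k x • EuclideanSpace.single i 1,
      (map_continuous (fourier k)).smul continuous_const⟩

/-- The span of the analytic-negative monomials. -/
def negSpan (ι : Type) [Fintype ι] : Submodule ℂ (L2 ι) :=
  Submodule.span ℂ
    {f | ∃ k : ℤ, k < 0 ∧ ∃ i : ι, f = @fourierV ι _ (Classical.decEq ι) k i}

/-- The vector-valued Hardy space `H²(𝕋, ℂ^ι)`, i.e. the orthogonal complement in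
`L²` of the span of the monomials `z^k ⊗ e_i`, `k < 0`. -/
def hardy (ι : Type) [Fintype ι] : Submodule ℂ (L2 ι) := (negSpan ι)ᗮ

/-- The Hardy space as a Hilbert space. -/
abbrev H2 (ι : Type) [Fintype ι] : Type := ↥(hardy ι)

instance : CompleteSpace (H2 ι) := by
  unfold H2 hardy; infer_instance

instance : HasOrthogonalProjection (hardy ι) := by
  unfold hardy; infer_instance

/-- The orthogonal projection `P` of `L²` onto `H²`. -/
def hardyProj (ι : Type) [Fintype ι] : L2 ι →L[ℂ] H2 ι :=
  orthogonalProjection (hardy ι)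

/-- A matrix-valued `L^∞` function on the circle (the matrices being identified with the
operators on `ℂ^ι` that they induce): a bounded measurable family of operators. -/
structure Symbol (ι : Type) [Fintype ι] : Type where
  toFun : 𝕋 → (V ι →L[ℂ] V ι)
  meas : AEStronglyMeasurable toFun μ𝕋
  bound : ℝ
  le_bound : ∀ x, ‖toFun x‖ ≤ bound

instance : CoeFun (Symbol ι) (fun _ => 𝕋 → (V ι →L[ℂ] V ι)) := ⟨Symbol.toFun⟩

/-- The multiplication operator `f ↦ Φ f` on `L²(𝕋, ℂ^ι)`. -/
def Symbol.mulLp (Φ : Symbol ι) : L2 ι →L[ℂ] L2 ι :=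
  pointwiseCLM Φ.toFun Φ.meas Φ.le_bound

/-- Pointwise product (composition) of two matrix symbols. -/
def Symbol.mul (Φ Ψ : Symbol ι) : Symbol ι where
  toFun := fun x => (Φ x).comp (Ψ x)
  meas := isBoundedBilinearMap_comp.continuous.comp_aestronglyMeasurable
    (Φ.meas.prodMk Ψ.meas)
  bound := max Φ.bound 0 * max Ψ.bound 0
  le_bound := fun x => (ContinuousLinearMap.opNorm_comp_le _ _).trans <|
    mul_le_mul ((Φ.le_bound x).trans (le_max_left _ _))
      ((Ψ.le_bound x).trans (le_max_left _ _)) (norm_nonneg _) (le_max_right _ _)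

/-- The pointwise adjoint symbol `Φ*` (conjugate transpose). -/
def Symbol.star (Φ : Symbol ι) : Symbol ι where
  toFun := fun x => ContinuousLinearMap.adjoint (Φ x)
  meas := (ContinuousLinearMap.adjoint (𝕜 := ℂ) (E := V ι)
      (F := V ι)).continuous.comp_aestronglyMeasurable Φ.meas
  bound := Φ.bound
  le_bound := fun x =>
    le_trans
      (le_of_eq ((ContinuousLinearMap.adjoint (𝕜 := ℂ) (E := V ι) (F := V ι)).norm_map (Φ.toFun x)))
      (Φ.le_bound x)

end BlockToeplitz

namespace BlockToeplitz
open scoped ComplexConjugate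

theorem norm_fourier_apply (k : ℤ) (x : 𝕋) : ‖fourier k x‖ = 1 := by
  rw [fourier_apply]; exact Circle.norm_coe _

section CompNeg

variable {E : Type*} [NormedAddCommGroup E] [NormedSpace ℂ E]

/-- The composition operator `f(z) ↦ f(z̄)` (i.e. `x ↦ -x` on the additive circle)
on `L²`. -/
def compNeg (E : Type*) [NormedAddCommGroup E] [NormedSpace ℂ E] :
    Lp E 2 μ𝕋 →L[ℂ] Lp E 2 μ𝕋 :=
  LinearMap.mkContinuous
    { toFun := fun f =>
        Lp.compMeasurePreserving (E := E) (p := 2) Neg.neg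
          (Measure.measurePreserving_neg μ𝕋) f
      map_add' := fun f g => by
        exact map_add (Lp.compMeasurePreserving Neg.neg (Measure.measurePreserving_neg μ𝕋)) f g
      map_smul' := fun c f => by
        apply Lp.ext
        have h1 := Lp.coeFn_compMeasurePreserving (μ := μ𝕋) (c • f)
          (Measure.measurePreserving_neg μ𝕋)
        have h2 := Lp.coeFn_compMeasurePreserving (μ := μ𝕋) f
          (Measure.measurePreserving_neg μ𝕋)
        have h3 : ((c • f : Lp E 2 μ𝕋) : 𝕋 → E) ∘ Neg.neg
            =ᵐ[μ𝕋] ((c • (f : 𝕋 → E)) ∘ Neg.neg) :=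
          (Measure.measurePreserving_neg μ𝕋).quasiMeasurePreserving.ae_eq_comp
            (Lp.coeFn_smul c f)
        filter_upwards [h1, h3,
          Lp.coeFn_smul c (Lp.compMeasurePreserving (E := E) (p := 2) Neg.neg
            (Measure.measurePreserving_neg μ𝕋) f), h2]
          with x hx1 hx3 hx4 hx2
        rw [RingHom.id_apply, hx1, hx3, hx4]
        show c • (f : 𝕋 → E) (-x)
            = c • (Lp.compMeasurePreserving (E := E) (p := 2) Neg.neg
                (Measure.measurePreserving_neg μ𝕋) f : 𝕋 → E) x
        rw [hx2]
        rfl }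
    1
    (fun f => by
      simpa using (Lp.norm_compMeasurePreserving (E := E) (p := 2) f
        (Measure.measurePreserving_neg μ𝕋)).le)

/-- The unitary operator `J f (z) = z̄ f(z̄)` on `L²`. -/
def Jop (E : Type*) [NormedAddCommGroup E] [NormedSpace ℂ E] :
    Lp E 2 μ𝕋 →L[ℂ] Lp E 2 μ𝕋 :=
  (pointwiseCLM (fun x => (fourier (-1) x : ℂ) • (1 : E →L[ℂ] E))
      (((map_continuous (fourier (-1))).smul continuous_const).aestronglyMeasurable)
      (C := 1)
      (fun x => by
        show ‖(fourier (-1)) x • (1 : E →L[ℂ] E)‖ ≤ 1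
        rw [norm_smul ((fourier (-1)) x) (1 : E →L[ℂ] E), norm_fourier_apply, one_mul,
          ContinuousLinearMap.one_def]
        exact ContinuousLinearMap.norm_id_le)).comp (compNeg E)

end CompNeg

end BlockToeplitz

namespace BlockToeplitz
open scoped ComplexConjugate

variable {ι : Type} [Fintype ι]

/-- The pointwise transposed-conjugated-reflected symbol `Φ̃(z) := Φ(z̄)*`. -/
def Symbol.tilde (Φ : Symbol ι) : Symbol ι where
  toFun := fun x => ContinuousLinearMap.adjoint (Φ.toFun (-x))
  meas := (ContinuousLinearMap.adjoint (𝕜 := ℂ) (E := V ι)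
      (F := V ι)).continuous.comp_aestronglyMeasurable
    (Φ.meas.comp_quasiMeasurePreserving
      (Measure.measurePreserving_neg μ𝕋).quasiMeasurePreserving)
  bound := Φ.bound
  le_bound := fun x =>
    le_trans
      (le_of_eq
        ((ContinuousLinearMap.adjoint (𝕜 := ℂ) (E := V ι) (F := V ι)).norm_map (Φ.toFun (-x))))
      (Φ.le_bound (-x))

/-- A matrix symbol belongs to `H^∞` iff multiplication by it leaves the Hardy space
invariant. -/
def Symbol.MemHinf (Φ : Symbol ι) : Prop :=
  ∀ f : L2 ι, f ∈ hardy ι → Φ.mulLp f ∈ hardy ι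

/-- A matrix `H^∞` symbol is inner if `Θ(z)*Θ(z) = I` a.e. -/
def Symbol.IsInner (Φ : Symbol ι) : Prop :=
  Φ.MemHinf ∧ ∀ᵐ x ∂μ𝕋, (ContinuousLinearMap.adjoint (Φ.toFun x)).comp (Φ.toFun x) = 1

/-- The block Toeplitz operator `T_Φ = P (Φ ·)` on the vector Hardy space. -/
def toeplitz (Φ : Symbol ι) : H2 ι →L[ℂ] H2 ι :=
  (hardyProj ι).comp (Φ.mulLp.comp (hardy ι).subtypeL)

/-- The block Hankel operator `H_Φ = J P^⊥ (Φ ·)`, viewed as an operator from `H²` to `H²`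
(its image indeed lies in `H²`). -/
def hankel (Φ : Symbol ι) : H2 ι →L[ℂ] H2 ι :=
  (hardyProj ι).comp <|
    (Jop (V ι)).comp <|
      (ContinuousLinearMap.id ℂ (L2 ι) - (hardy ι).subtypeL.comp (hardyProj ι)).comp <|
        Φ.mulLp.comp (hardy ι).subtypeL

/-- The image `Θ · H²` of the Hardy space under multiplication by a symbol. -/
def Symbol.rangeH2 (Φ : Symbol ι) : Submodule ℂ (L2 ι) :=
  (hardy ι).map (Φ.mulLp : L2 ι →ₗ[ℂ] L2 ι)

/-- The model space `H(Θ) := H² ⊖ Θ H²`. -/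
def modelSpace (Θ : Symbol ι) : Submodule ℂ (L2 ι) :=
  hardy ι ⊓ (Θ.rangeH2)ᗮ

/-- A scalar-valued `L^∞` function on the circle. -/
structure SymbolS : Type where
  toFun : 𝕋 → ℂ
  meas : AEStronglyMeasurable toFun μ𝕋
  bound : ℝ
  le_bound : ∀ x, ‖toFun x‖ ≤ bound

instance : CoeFun SymbolS (fun _ => 𝕋 → ℂ) := ⟨SymbolS.toFun⟩

/-- Scalar symbols embed into matrix symbols as `φ I_n`. -/
def SymbolS.toMatrix (φ : SymbolS) (ι : Type) [Fintype ι] : Symbol ι where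
  toFun := fun x => φ.toFun x • (1 : V ι →L[ℂ] V ι)
  meas := φ.meas.smul aestronglyMeasurable_const
  bound := φ.bound
  le_bound := fun x => by
    have h0 : (0 : ℝ) ≤ φ.bound := le_trans (norm_nonneg _) (φ.le_bound 0)
    calc ‖φ.toFun x • (1 : V ι →L[ℂ] V ι)‖ ≤ ‖φ.toFun x‖ * ‖(1 : V ι →L[ℂ] V ι)‖ :=
          ContinuousLinearMap.opNorm_smul_le _ _
      _ ≤ φ.bound * 1 := by
          refine mul_le_mul (φ.le_bound x) ?_ (norm_nonneg _) h0
          rw [ContinuousLinearMap.one_def]; exact ContinuousLinearMap.norm_id_le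
      _ = φ.bound := mul_one _

/-- The scalar-valued `L²` space of the circle. -/
abbrev L2S : Type := Lp ℂ 2 μ𝕋

/-- The span of the negative trigonometric monomials. -/
def negSpanS : Submodule ℂ L2S :=
  Submodule.span ℂ {f | ∃ k : ℤ, k < 0 ∧ f = fourierLp 2 k}

/-- The scalar Hardy space `H²(𝕋)`. -/
def hardyS : Submodule ℂ L2S := negSpanSᗮ

/-- The scalar Hardy space as a Hilbert space. -/
abbrev H2S : Type := ↥hardyS

instance : CompleteSpace H2S := by unfold H2S hardyS; infer_instance

instance : HasOrthogonalProjection hardyS := by unfold hardyS; infer_instance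

/-- The Szegő (Riesz) projection `P : L² → H²`. -/
def hardyProjS : L2S →L[ℂ] H2S := orthogonalProjection hardyS

/-- Multiplication by a scalar `L^∞` function, as an operator on `L²(𝕋)`. -/
def SymbolS.mulLp (φ : SymbolS) : L2S →L[ℂ] L2S :=
  pointwiseCLM (fun x => φ.toFun x • (1 : ℂ →L[ℂ] ℂ))
    (φ.meas.smul aestronglyMeasurable_const)
    (C := φ.bound)
    (fun x => by
      calc ‖φ.toFun x • (1 : ℂ →L[ℂ] ℂ)‖ ≤ ‖φ.toFun x‖ * ‖(1 : ℂ →L[ℂ] ℂ)‖ :=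
            ContinuousLinearMap.opNorm_smul_le _ _
        _ = ‖φ.toFun x‖ := by rw [norm_one, mul_one]
        _ ≤ φ.bound := φ.le_bound x)

/-- The scalar Toeplitz operator `T_φ` on `H²`. -/
def toeplitzS (φ : SymbolS) : H2S →L[ℂ] H2S :=
  hardyProjS.comp (φ.mulLp.comp hardyS.subtypeL)

/-- The scalar Hankel operator `H_φ = J P^⊥ (φ ·)` on `H²`. -/
def hankelS (φ : SymbolS) : H2S →L[ℂ] H2S :=
  hardyProjS.comp <|
    (Jop ℂ).comp <|
      (ContinuousLinearMap.id ℂ L2S - hardyS.subtypeL.comp hardyProjS).comp <|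
        φ.mulLp.comp hardyS.subtypeL

/-- Pointwise product of scalar symbols. -/
def SymbolS.mul (φ ψ : SymbolS) : SymbolS where
  toFun := fun x => φ.toFun x * ψ.toFun x
  meas := φ.meas.mul ψ.meas
  bound := max φ.bound 0 * max ψ.bound 0
  le_bound := fun x => by
    rw [norm_mul]
    exact mul_le_mul ((φ.le_bound x).trans (le_max_left _ _))
      ((ψ.le_bound x).trans (le_max_left _ _)) (norm_nonneg _) (le_max_right _ _)

/-- The complex-conjugate symbol `φ̄`. -/
def SymbolS.conj (φ : SymbolS) : SymbolS where
  toFun := fun x => conj (φ.toFun x)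
  meas := Complex.continuous_conj.comp_aestronglyMeasurable φ.meas
  bound := φ.bound
  le_bound := fun x => le_trans (le_of_eq (RCLike.norm_conj _)) (φ.le_bound x)

/-- The reflected conjugate symbol `φ̃(z) := conj (φ(z̄))`. -/
def SymbolS.tilde (φ : SymbolS) : SymbolS where
  toFun := fun x => conj (φ.toFun (-x))
  meas := Complex.continuous_conj.comp_aestronglyMeasurable
    (φ.meas.comp_quasiMeasurePreserving
      (Measure.measurePreserving_neg μ𝕋).quasiMeasurePreserving)
  bound := φ.bound
  le_bound := fun x => le_trans (le_of_eq (RCLike.norm_conj _)) (φ.le_bound (-x))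

/-- A scalar symbol is in `H^∞` iff multiplication by it preserves `H²`. -/
def SymbolS.MemHinf (φ : SymbolS) : Prop :=
  ∀ f : L2S, f ∈ hardyS → φ.mulLp f ∈ hardyS

/-- A scalar inner function: an `H^∞` function which is unimodular a.e. on the circle. -/
def SymbolS.IsInner (φ : SymbolS) : Prop :=
  φ.MemHinf ∧ ∀ᵐ x ∂μ𝕋, ‖φ.toFun x‖ = 1

/-- The image `θ · H²` of the Hardy space under a scalar multiplication operator. -/
def SymbolS.rangeH2 (φ : SymbolS) : Submodule ℂ L2S :=
  hardyS.map (φ.mulLp : L2S →ₗ[ℂ] L2S)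

/-- The scalar model space `H(θ) = H² ⊖ θH²`. -/
def modelSpaceS (θ : SymbolS) : Submodule ℂ L2S :=
  hardyS ⊓ (θ.rangeH2)ᗮ

/-- The coordinate function `z` on the circle (i.e. `x ↦ e^{ix}`). -/
def circleCoord : 𝕋 → ℂ := fun x => fourier 1 x

/-- The symbol `z` of the unilateral shift. -/
def shiftSymbolS : SymbolS where
  toFun := circleCoord
  meas := (map_continuous (fourier 1)).aestronglyMeasurable
  bound := 1
  le_bound := fun x => le_of_eq (norm_fourier_apply 1 x)

/-- The symbol `z̄`. -/
def coshiftSymbolS : SymbolS where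
  toFun := fun x => fourier (-1) x
  meas := (map_continuous (fourier (-1))).aestronglyMeasurable
  bound := 1
  le_bound := fun x => le_of_eq (norm_fourier_apply (-1) x)

/-- An operator on a complex Hilbert space is hyponormal if its self-commutator
`[T*, T] = T*T - TT*` is a positive operator. -/
def Hyponormal {H : Type*} [NormedAddCommGroup H] [InnerProductSpace ℂ H] [CompleteSpace H]
    (T : H →L[ℂ] H) : Prop :=
  (ContinuousLinearMap.adjoint T ∘L T - T ∘L ContinuousLinearMap.adjoint T).IsPositive

/-- A Blaschke factor `b_a(z) = (z - a)/(1 - āz)`. -/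
def blaschke (a z : ℂ) : ℂ := (z - a) / (1 - conj a * z)

end BlockToeplitz

/-!
Since `D* D = I`, the cofactor is `E = b_λ D*`. Hence every entry `d_ij` of `D` lies in `H²`,
while `conj b_λ · d_ij = conj e_ji` has no positive frequencies; this forces
`d_ij ∈ span {1, b_λ}`, i.e. `D = A + b_λ B` with constant matrices `A`, `B`. The pencil
`A + w B` is then unitary for every `w` on the circle, and comparing coefficients of
`w`, `w̄` and `1` at three points gives `A* B = 0` and `A* A + B* B = I`. So `ν := A + B` is
unitary, `P := B* B = ν* B` is an orthogonal projection, and `A + w B = ν (w P + (I - P))`.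
-/

namespace BlockToeplitz
open scoped ComplexConjugate

section FourierCoeff

variable {T : ℝ} [Fact (0 < T)]

theorem fourierCoeff_fourier_mul (f : AddCircle T → ℂ) (m n : ℤ) :
    fourierCoeff (fun x => fourier m x * f x) n = fourierCoeff f (n - m) := by
  unfold fourierCoeff
  congr 1 with x
  rw [smul_eq_mul, smul_eq_mul, ← mul_assoc, ← fourier_add, neg_sub, sub_eq_neg_add]

theorem fourierCoeff_conj (f : AddCircle T → ℂ) (n : ℤ) :
    fourierCoeff (fun x => conj (f x)) n = conj (fourierCoeff f (-n)) := by
  unfold fourierCoeff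
  rw [← integral_conj]
  congr 1 with x
  rw [smul_eq_mul, smul_eq_mul, map_mul, ← fourier_neg, neg_neg]

theorem fourierCoeff_const_of_ne_zero (c : ℂ) {n : ℤ} (hn : n ≠ 0) :
    fourierCoeff (fun _ : AddCircle T => c) n = 0 := by
  have hc : (fun _ : AddCircle T => c) = c • ⇑(fourier (T := T) 0) := by
    ext x; simp
  rw [hc, fourierCoeff.const_smul, fourierCoeff_fourier, Pi.single_eq_of_ne hn, smul_zero]

theorem fourierCoeff_const_add_fourier_one_mul {f : AddCircle T → ℂ}
    (hf : Integrable f AddCircle.haarAddCircle) (a c : ℂ) (n : ℤ) :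
    fourierCoeff (fun x => (a + c * fourier 1 x) * f x) n
      = a * fourierCoeff f n + c * fourierCoeff f (n - 1) := by
  have hz : Integrable (fun x => c * (fourier 1 x * f x)) AddCircle.haarAddCircle := by
    simpa only [smul_eq_mul] using (hf.fourier_smul 1).const_mul c
  have hsplit : (fun x => (a + c * fourier 1 x) * f x)
      = (fun x => a * f x) + fun x => c * (fourier 1 x * f x) := by
    ext x; simp only [Pi.add_apply]; ring
  rw [hsplit, fourierCoeff.add (hf.const_mul a) hz, Pi.add_apply, fourierCoeff.const_mul,
    fourierCoeff.const_mul, fourierCoeff_fourier_mul]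

theorem ae_eq_zero_of_fourierCoeff_eq_zero {f : AddCircle T → ℂ}
    (hf : MemLp f 2 AddCircle.haarAddCircle) (h : ∀ n, fourierCoeff f n = 0) :
    f =ᵐ[AddCircle.haarAddCircle] 0 := by
  have hF : hf.toLp f = 0 := by
    refine fourierBasis.repr.injective (lp.ext (funext fun n => ?_))
    rw [fourierBasis_repr, fourierCoeff_congr_ae hf.coeFn_toLp, h, map_zero]
    rfl
  exact hf.coeFn_toLp.symm.trans (hF ▸ Lp.coeFn_zero _ _ _)

theorem fourierCoeff_sub {f g : AddCircle T → ℂ} (hf : Integrable f AddCircle.haarAddCircle)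
    (hg : Integrable g AddCircle.haarAddCircle) :
    fourierCoeff (f - g) = fourierCoeff f - fourierCoeff g := by
  ext n
  simpa [fourierCoeff, -fourier_apply, mul_sub] using
    integral_sub (hf.fourier_smul (-n)) (hg.fourier_smul (-n))

theorem memLp_of_continuous {g : AddCircle T → ℂ} (hg : Continuous g) (p : ENNReal) :
    MemLp g p AddCircle.haarAddCircle :=
  hg.memLp_of_hasCompactSupport (HasCompactSupport.of_compactSpace _)

theorem ae_eq_sum_fourier_of_fourierCoeff_eq_zero {f : AddCircle T → ℂ}
    (hf : MemLp f 2 AddCircle.haarAddCircle) (s : Finset ℤ) (h : ∀ n ∉ s, fourierCoeff f n = 0) :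
    f =ᵐ[AddCircle.haarAddCircle] fun x => ∑ n ∈ s, fourierCoeff f n * fourier n x := by
  set p : C(AddCircle T, ℂ) := ∑ n ∈ s, fourierCoeff f n • fourier n with hp
  have hp_apply : ∀ x, p x = ∑ n ∈ s, fourierCoeff f n * fourier n x := fun x => by
    simp [hp]
  have hint : ∀ n ∈ s, Integrable ⇑(fourierCoeff f n • fourier (T := T) n)
      AddCircle.haarAddCircle :=
    fun n _ => (memLp_of_continuous (ContinuousMap.continuous _) 1).integrable le_rfl
  have hcoeff : ∀ m, fourierCoeff p m = fourierCoeff f m := fun m => by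
    rw [hp, ContinuousMap.coe_sum, fourierCoeff.sum s _ hint, Finset.sum_apply]
    simp_rw [ContinuousMap.coe_smul, fourierCoeff.const_smul, fourierCoeff_fourier (T := T)]
    simp only [Pi.single_apply, smul_eq_mul, mul_ite, mul_one, mul_zero, Finset.sum_ite_eq]
    split_ifs with hm
    · rfl
    · exact (h m hm).symm
  have hdiff : f - ⇑p =ᵐ[AddCircle.haarAddCircle] 0 := by
    refine ae_eq_zero_of_fourierCoeff_eq_zero (hf.sub (memLp_of_continuous p.continuous 2))
      fun m => ?_
    rw [fourierCoeff_sub (hf.integrable one_le_two)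
      ((memLp_of_continuous p.continuous 1).integrable le_rfl), Pi.sub_apply, hcoeff, sub_self]
  filter_upwards [hdiff] with x hx
  rw [← hp_apply]
  exact sub_eq_zero.mp hx

end FourierCoeff

section Blaschke

variable {lam z : ℂ}

theorem one_sub_conj_mul_ne_zero (hlam : ‖lam‖ < 1) (hz : ‖z‖ = 1) : 1 - conj lam * z ≠ 0 := by
  intro h
  have : ‖conj lam * z‖ = 1 := by rw [← sub_eq_zero.mp h, norm_one]
  rw [norm_mul, hz, mul_one, RCLike.norm_conj] at this
  exact hlam.ne this

theorem blaschke_mul_one_sub_conj_mul (hlam : ‖lam‖ < 1) (hz : ‖z‖ = 1) :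
    blaschke lam z * (1 - conj lam * z) = z - lam :=
  div_mul_cancel₀ _ (one_sub_conj_mul_ne_zero hlam hz)

theorem norm_blaschke (hlam : ‖lam‖ < 1) (hz : ‖z‖ = 1) : ‖blaschke lam z‖ = 1 := by
  have hzz : z * conj z = 1 := by rw [Complex.mul_conj', hz]; norm_num
  have hnum : z - lam = z * conj (1 - conj lam * z) := by
    rw [map_sub, map_one, map_mul, Complex.conj_conj]
    linear_combination lam * hzz
  rw [blaschke, norm_div, hnum, norm_mul, hz, one_mul, RCLike.norm_conj,
    div_self (norm_ne_zero_iff.mpr (one_sub_conj_mul_ne_zero hlam hz))]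

theorem conj_mul_self_of_norm_eq_one {w : ℂ} (hw : ‖w‖ = 1) : conj w * w = 1 := by
  rw [Complex.conj_mul', hw]; norm_num

theorem conj_blaschke_mul_sub (hlam : ‖lam‖ < 1) (hz : ‖z‖ = 1) :
    conj (blaschke lam z) * (z - lam) = 1 - conj lam * z := by
  rw [← blaschke_mul_one_sub_conj_mul hlam hz, ← mul_assoc,
    conj_mul_self_of_norm_eq_one (norm_blaschke hlam hz), one_mul]

theorem one_sub_mul_conj_ne_zero (hlam : ‖lam‖ < 1) : 1 - lam * conj lam ≠ 0 := by
  intro h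
  have := congrArg norm (sub_eq_zero.mp h).symm
  rw [norm_mul, RCLike.norm_conj, norm_one] at this
  nlinarith [norm_nonneg lam]

theorem blaschke_injOn (hlam : ‖lam‖ < 1) : Set.InjOn (blaschke lam) (Metric.sphere 0 1) := by
  intro z hz w hw h
  rw [mem_sphere_zero_iff_norm] at hz hw
  rw [blaschke, blaschke, div_eq_div_iff (one_sub_conj_mul_ne_zero hlam hz)
    (one_sub_conj_mul_ne_zero hlam hw)] at h
  have : (z - w) * (1 - lam * conj lam) = 0 := by linear_combination h
  exact sub_eq_zero.mp ((mul_eq_zero.mp this).resolve_right (one_sub_mul_conj_ne_zero hlam))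

theorem exists_const_add_mul_eq_one_sub_conj_mul_mul (hlam : ‖lam‖ < 1) (c₀ c₁ : ℂ) :
    ∃ α β : ℂ, ∀ z : ℂ, ‖z‖ = 1 →
      c₀ + c₁ * z = (1 - conj lam * z) * (α + β * blaschke lam z) := by
  have hΔ := one_sub_mul_conj_ne_zero hlam
  refine ⟨(c₀ + lam * c₁) / (1 - lam * conj lam), (c₁ + conj lam * c₀) / (1 - lam * conj lam),
    fun z hz => ?_⟩
  set α := (c₀ + lam * c₁) / (1 - lam * conj lam)
  set β := (c₁ + conj lam * c₀) / (1 - lam * conj lam)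
  calc c₀ + c₁ * z = α * (1 - conj lam * z) + β * (z - lam) := by
        simp only [α, β]; field_simp; ring
    _ = (1 - conj lam * z) * (α + β * blaschke lam z) := by
        rw [← blaschke_mul_one_sub_conj_mul hlam hz]; ring

end Blaschke

theorem norm_circleCoord (x : 𝕋) : ‖circleCoord x‖ = 1 := norm_fourier_apply 1 x

theorem continuous_circleCoord : Continuous circleCoord := map_continuous (fourier 1)

theorem circleCoord_surjOn : Set.SurjOn circleCoord Set.univ (Metric.sphere 0 1) := by
  intro w hw
  obtain ⟨x, hx⟩ := (AddCircle.homeomorphCircle (T := 2 * π) (by positivity)).surjective ⟨w, hw⟩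
  refine ⟨x, Set.mem_univ x, ?_⟩
  rw [AddCircle.homeomorphCircle_apply] at hx
  rw [circleCoord, fourier_apply, one_zsmul, hx]

theorem continuous_blaschke_circleCoord {lam : ℂ} (hlam : ‖lam‖ < 1) :
    Continuous fun x => blaschke lam (circleCoord x) :=
  (continuous_circleCoord.sub continuous_const).div
    (continuous_const.sub (continuous_const.mul continuous_circleCoord))
    fun x => one_sub_conj_mul_ne_zero hlam (norm_circleCoord x)

theorem ae_eq_const_add_mul_blaschke {lam : ℂ} (hlam : ‖lam‖ < 1) {d : 𝕋 → ℂ}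
    (hd : MemLp d 2 μ𝕋) (hneg : ∀ n < 0, fourierCoeff d n = 0)
    (hpos : ∀ n > 0, fourierCoeff (fun x => conj (blaschke lam (circleCoord x)) * d x) n = 0) :
    ∃ α β : ℂ, ∀ᵐ x ∂μ𝕋, d x = α + β * blaschke lam (circleCoord x) := by
  set g := fun x => conj (blaschke lam (circleCoord x)) * d x
  have hdi : Integrable d μ𝕋 := hd.integrable one_le_two
  have hgi : Integrable g μ𝕋 :=
    hdi.bdd_mul (continuous_blaschke_circleCoord hlam).star.aestronglyMeasurable
      (c := 1) (ae_of_all _ fun x => by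
        rw [RCLike.norm_conj, norm_blaschke hlam (norm_circleCoord x)])
  -- `e := (1 - λ̄ z) d = (z - λ) g` has no negative frequencies (from `d`) and none above `1`
  -- (from `g`), hence is a polynomial of degree at most one.
  set e := fun x => (1 + -conj lam * fourier 1 x) * d x
  have he_g : e = fun x => (-lam + 1 * fourier 1 x) * g x := by
    ext x
    have := conj_blaschke_mul_sub hlam (norm_circleCoord x)
    simp only [e, g, circleCoord] at this ⊢
    linear_combination -(d x) * this
  have he : ∀ n ∉ ({0, 1} : Finset ℤ), fourierCoeff e n = 0 := by
    intro n hn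
    simp only [Finset.mem_insert, Finset.mem_singleton, not_or] at hn
    rcases lt_or_gt_of_ne hn.1 with hn0 | hn0
    · rw [fourierCoeff_const_add_fourier_one_mul hdi, hneg n hn0, hneg (n - 1) (by omega)]
      ring
    · rw [he_g, fourierCoeff_const_add_fourier_one_mul hgi, hpos n hn0, hpos (n - 1) (by omega)]
      ring
  have heM : MemLp e 2 μ𝕋 :=
    hd.mul' (memLp_of_continuous (by fun_prop) ⊤)
  obtain ⟨α, β, hαβ⟩ := exists_const_add_mul_eq_one_sub_conj_mul_mul hlam
    (fourierCoeff e 0) (fourierCoeff e 1)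
  refine ⟨α, β, ?_⟩
  filter_upwards [ae_eq_sum_fourier_of_fourierCoeff_eq_zero heM _ he] with x hx
  have hz := norm_circleCoord x
  refine mul_left_cancel₀ (one_sub_conj_mul_ne_zero hlam hz) ?_
  rw [← hαβ _ hz]
  simpa [e, Finset.sum_pair, circleCoord, sub_eq_add_neg] using hx

section Pencil

theorem eq_zero_of_three_roots {K M : Type*} [Field K] [AddCommGroup M] [Module K M]
    {a b c : K} (hab : a ≠ b) (hac : a ≠ c) (hbc : b ≠ c) {X Y Z : M}
    (ha : a ^ 2 • X + a • Y + Z = 0) (hb : b ^ 2 • X + b • Y + Z = 0)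
    (hc : c ^ 2 • X + c • Y + Z = 0) : X = 0 ∧ Y = 0 ∧ Z = 0 := by
  have hab' := sub_ne_zero.mpr hab
  have hac' := sub_ne_zero.mpr hac
  have hbc' := sub_ne_zero.mpr hbc
  have hX : ((a - b) * (a - c) * (b - c)) • X = 0 := by
    linear_combination (norm := module) (b - c) • ha - (a - c) • hb + (a - b) • hc
  obtain rfl : X = 0 := (smul_eq_zero.mp hX).resolve_left (by simp [*])
  have hY : (a - b) • Y = 0 := by linear_combination (norm := module) ha - hb
  obtain rfl : Y = 0 := (smul_eq_zero.mp hY).resolve_left hab'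
  exact ⟨rfl, rfl, by simpa using ha⟩

variable {R : Type*} [Ring R] [StarRing R] [Algebra ℂ R] [StarModule ℂ R]

theorem star_add_smul_mul_add_smul (A B : R) {w : ℂ} (hw : ‖w‖ = 1) :
    star (A + w • B) * (A + w • B)
      = (star A * A + star B * B) + w • (star A * B) + conj w • (star B * A) := by
  have hw' : conj w * w = 1 := conj_mul_self_of_norm_eq_one hw
  simp only [star_add, star_smul, add_mul, mul_add, mul_smul_comm, smul_mul_assoc,
    RCLike.star_def]
  linear_combination (norm := module) hw' • (star B * B)

theorem star_mul_eq_zero_of_isometry_pencil {A B : R} {w₀ w₁ w₂ : ℂ}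
    (h₀₁ : w₀ ≠ w₁) (h₀₂ : w₀ ≠ w₂) (h₁₂ : w₁ ≠ w₂)
    (h : ∀ w ∈ ({w₀, w₁, w₂} : Set ℂ), ‖w‖ = 1 ∧ star (A + w • B) * (A + w • B) = 1) :
    star A * B = 0 ∧ star A * A + star B * B = 1 := by
  -- multiplying `w X + w̄ Y + (S - 1) = 0` by `w` gives a quadratic equation in `w`
  have hquad : ∀ w ∈ ({w₀, w₁, w₂} : Set ℂ),
      w ^ 2 • (star A * B) + w • (star A * A + star B * B - 1) + star B * A = 0 := by
    intro w hmem
    obtain ⟨hw, hiso⟩ := h w hmem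
    have hw' : w * conj w = 1 := by rw [mul_comm]; exact conj_mul_self_of_norm_eq_one hw
    have := congrArg (w • ·) (sub_eq_zero.mpr hiso)
    simp only [star_add_smul_mul_add_smul A B hw, smul_zero] at this
    linear_combination (norm := module) this - hw' • (star B * A)
  obtain ⟨hX, hS, -⟩ := eq_zero_of_three_roots h₀₁ h₀₂ h₁₂
    (hquad w₀ (by simp)) (hquad w₁ (by simp)) (hquad w₂ (by simp))
  exact ⟨hX, sub_eq_zero.mp hS⟩

end Pencil

section BlaschkePotapov

variable {E : Type*} [NormedAddCommGroup E] [InnerProductSpace ℂ E] [FiniteDimensional ℂ E]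

theorem mul_eq_one_comm_of_finiteDimensional {S T : E →L[ℂ] E} (h : S * T = 1) : T * S = 1 :=
  ContinuousLinearMap.coe_inj.mp <|
    mul_eq_one_comm.mp (congrArg ContinuousLinearMap.toLinearMap h : (S : E →ₗ[ℂ] E) * T = 1)

/-- The witnesses are `ν := A + B` and `P := B* B`. -/
theorem exists_blaschkePotapov_of_star_mul_eq_zero {A B : E →L[ℂ] E} (hAB : star A * B = 0)
    (hS : star A * A + star B * B = 1) :
    ∃ ν ∈ unitary (E →L[ℂ] E), ∃ P : E →L[ℂ] E, IsSelfAdjoint P ∧ P * P = P ∧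
      ∀ w : ℂ, A + w • B = ν * (w • P + (1 - P)) := by
  have hBA : star B * A = 0 := by simpa using congrArg star hAB
  have hνν : star (A + B) * (A + B) = 1 := by
    rw [star_add, add_mul, mul_add, mul_add, hAB, hBA, ← hS]; abel
  have hνν' : (A + B) * star (A + B) = 1 := mul_eq_one_comm_of_finiteDimensional hνν
  have hP : star (A + B) * B = star B * B := by rw [star_add, add_mul, hAB, zero_add]
  have hνP : (A + B) * (star B * B) = B := by rw [← hP, ← mul_assoc, hνν', one_mul]
  refine ⟨A + B, Unitary.mem_iff.mpr ⟨hνν, hνν'⟩, star B * B, .star_mul_self B, ?_, fun w => ?_⟩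
  · calc star B * B * (star B * B)
        = star (star (A + B) * B) * (star (A + B) * B) := by
          rw [hP, star_mul, star_star]
      _ = star B * ((A + B) * star (A + B)) * B := by
          rw [star_mul, star_star, mul_assoc, mul_assoc, mul_assoc]
      _ = star B * B := by rw [hνν', mul_one]
  · rw [mul_add, mul_sub, mul_one, mul_smul_comm, hνP]; abel

end BlaschkePotapov

section VectorHardy

variable {ι : Type} [Fintype ι]

theorem fourierV_mem_negSpan [DecidableEq ι] {k : ℤ} (hk : k < 0) (i : ι) :
    fourierV ι k i ∈ negSpan ι := by
  have : @fourierV ι _ (Classical.decEq ι) k i ∈ negSpan ι := Submodule.subset_span ⟨k, hk, i, rfl⟩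
  convert this

theorem coeFn_fourierV [DecidableEq ι] (k : ℤ) (i : ι) :
    (fourierV ι k i : 𝕋 → V ι) =ᵐ[μ𝕋] fun x => fourier k x • EuclideanSpace.single i 1 :=
  ContinuousMap.coeFn_toLp μ𝕋 _

theorem inner_fourierV [DecidableEq ι] (k : ℤ) (i : ι) (F : L2 ι) :
    inner ℂ (fourierV ι k i) F = fourierCoeff (fun x => (F : 𝕋 → V ι) x i) k := by
  rw [MeasureTheory.L2.inner_def, fourierCoeff]
  refine integral_congr_ae ?_
  filter_upwards [coeFn_fourierV k i] with x hx
  rw [hx, inner_smul_left, EuclideanSpace.inner_single_left, map_one, one_mul, fourier_neg,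
    smul_eq_mul]

theorem fourierCoeff_apply_eq_zero_of_mem_hardy {f : L2 ι} (hf : f ∈ hardy ι) {k : ℤ}
    (hk : k < 0) (i : ι) : fourierCoeff (fun x => (f : 𝕋 → V ι) x i) k = 0 := by
  classical
  rw [← inner_fourierV]
  exact (Submodule.mem_orthogonal _ _).mp hf _ (fourierV_mem_negSpan hk i)

theorem fourierV_zero_mem_hardy [DecidableEq ι] (j : ι) : fourierV ι 0 j ∈ hardy ι := by
  refine Submodule.isOrtho_iff_le.mp (Submodule.isOrtho_span.mpr ?_).symm
    (Submodule.mem_span_singleton_self _)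
  rintro _ ⟨k, hk, i, rfl⟩ _ rfl
  rw [@inner_fourierV _ _ (Classical.decEq ι)]
  have hconst : (fun x => (fourierV ι 0 j : 𝕋 → V ι) x i)
      =ᵐ[μ𝕋] fun _ => (EuclideanSpace.single j 1 : V ι) i := by
    filter_upwards [coeFn_fourierV 0 j] with x hx
    rw [hx, fourier_zero, one_smul]
  rw [fourierCoeff_congr_ae hconst, fourierCoeff_const_of_ne_zero _ hk.ne]

theorem Symbol.coeFn_mulLp (Φ : Symbol ι) (f : L2 ι) :
    (Φ.mulLp f : 𝕋 → V ι) =ᵐ[μ𝕋] fun x => Φ x ((f : 𝕋 → V ι) x) :=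
  (memLp_pointwise Φ.meas Φ.le_bound f).coeFn_toLp

theorem Symbol.memLp_apply (Φ : Symbol ι) (v : V ι) (i : ι) :
    MemLp (fun x => Φ x v i) 2 μ𝕋 := by
  refine (memLp_top_of_bound ((by fun_prop : Continuous fun T : V ι →L[ℂ] V ι => T v i)
    |>.comp_aestronglyMeasurable Φ.meas) (Φ.bound * ‖v‖) (ae_of_all _ fun x => ?_)).mono_exponent
    le_top
  exact (PiLp.norm_apply_le _ i).trans ((Φ x).le_opNorm v |>.trans
    (mul_le_mul_of_nonneg_right (Φ.le_bound x) (norm_nonneg v)))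

theorem Symbol.MemHinf.fourierCoeff_apply_single_eq_zero {Φ : Symbol ι} (hΦ : Φ.MemHinf)
    [DecidableEq ι] (i j : ι) {k : ℤ} (hk : k < 0) :
    fourierCoeff (fun x => Φ x (EuclideanSpace.single j 1) i) k = 0 := by
  have := fourierCoeff_apply_eq_zero_of_mem_hardy (hΦ _ (fourierV_zero_mem_hardy j)) hk i
  rwa [fourierCoeff_congr_ae ?_] at this
  filter_upwards [Φ.coeFn_mulLp (fourierV ι 0 j), coeFn_fourierV (ι := ι) 0 j] with x hx hx0
  rw [hx, hx0, fourier_zero, one_smul]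

end VectorHardy

section Entries

variable {ι : Type} [Fintype ι] [DecidableEq ι]

theorem ext_single_apply {S T : V ι →L[ℂ] V ι}
    (h : ∀ i j, S (EuclideanSpace.single j 1) i = T (EuclideanSpace.single j 1) i) : S = T :=
  ContinuousLinearMap.coe_inj.mp <| (EuclideanSpace.basisFun ι ℂ).toBasis.ext fun j => by
    simpa using PiLp.ext fun i => h i j

theorem toEuclideanCLM_single_apply (M : Matrix ι ι ℂ) (i j : ι) :
    Matrix.toEuclideanCLM (n := ι) (𝕜 := ℂ) M (EuclideanSpace.single j 1) i = M i j := by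
  rw [Matrix.ofLp_toEuclideanCLM, PiLp.ofLp_single, Matrix.mulVec_single_one]
  rfl

theorem adjoint_single_apply (T : V ι →L[ℂ] V ι) (i j : ι) :
    ContinuousLinearMap.adjoint T (EuclideanSpace.single i 1) j
      = conj (T (EuclideanSpace.single j 1) i) := by
  have h := EuclideanSpace.inner_single_left j (1 : ℂ) (ContinuousLinearMap.adjoint T
    (EuclideanSpace.single i 1))
  rw [ContinuousLinearMap.adjoint_inner_right, ← inner_conj_symm,
    EuclideanSpace.inner_single_left] at h
  simpa using h.symm

theorem exists_ae_eq_const_add_smul_of_entries {X : Type*} [MeasurableSpace X] {μ : Measure X}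
    {F : X → V ι →L[ℂ] V ι} {g : X → ℂ}
    (h : ∀ i j, ∃ α β : ℂ, ∀ᵐ x ∂μ, F x (EuclideanSpace.single j 1) i = α + β * g x) :
    ∃ A B : V ι →L[ℂ] V ι, ∀ᵐ x ∂μ, F x = A + g x • B := by
  choose α β hαβ using h
  refine ⟨Matrix.toEuclideanCLM (n := ι) (𝕜 := ℂ) (Matrix.of α),
    Matrix.toEuclideanCLM (n := ι) (𝕜 := ℂ) (Matrix.of β), ?_⟩
  filter_upwards [ae_all_iff.2 fun i => ae_all_iff.2 fun j => hαβ i j] with x hx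
  refine ext_single_apply fun i j => ?_
  simp only [add_apply, smul_apply, PiLp.add_apply,
    PiLp.smul_apply, toEuclideanCLM_single_apply, Matrix.of_apply, hx, smul_eq_mul, mul_comm]

end Entries

theorem eq_smul_star_of_smul_one_eq_mul {E : Type*} [NormedAddCommGroup E]
    [InnerProductSpace ℂ E] [FiniteDimensional ℂ E] {e d : E →L[ℂ] E} {c : ℂ}
    (hd : star d * d = 1) (h : c • 1 = e * d) : e = c • star d := by
  calc e = e * d * star d := by rw [mul_assoc, mul_eq_one_comm_of_finiteDimensional hd, mul_one]
    _ = c • star d := by rw [← h, smul_one_mul]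

theorem exists_ae_eq_const_add_blaschke_smul {ι : Type} [Fintype ι] {lam : ℂ}
    (hlam : ‖lam‖ < 1) {D E : Symbol ι} (hD : D.IsInner) (hE : E.MemHinf)
    (hdiv : ∀ᵐ x ∂μ𝕋,
      (blaschke lam (circleCoord x)) • (1 : V ι →L[ℂ] V ι) = (E.toFun x).comp (D.toFun x)) :
    ∃ A B : V ι →L[ℂ] V ι, ∀ᵐ x ∂μ𝕋, D x = A + blaschke lam (circleCoord x) • B := by
  classical
  have hE_eq : ∀ᵐ x ∂μ𝕋, E x = blaschke lam (circleCoord x) • star (D x) := by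
    filter_upwards [hD.2, hdiv] with x hx hdivx
    exact eq_smul_star_of_smul_one_eq_mul hx hdivx
  refine exists_ae_eq_const_add_smul_of_entries fun i j =>
    ae_eq_const_add_mul_blaschke hlam (D.memLp_apply _ i)
      (fun n hn => hD.1.fourierCoeff_apply_single_eq_zero i j hn) fun n hn => ?_
  -- `conj b_λ · D_ij` is the conjugate of the entry `E_ji = b_λ conj D_ij` of an `H^∞` symbol
  have hconj : (fun x => conj (blaschke lam (circleCoord x)) * D x (EuclideanSpace.single j 1) i)
      =ᵐ[μ𝕋] fun x => conj (E x (EuclideanSpace.single i 1) j) := by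
    filter_upwards [hE_eq] with x hx
    rw [hx, smul_apply, PiLp.smul_apply, ContinuousLinearMap.star_eq_adjoint,
      adjoint_single_apply, smul_eq_mul, map_mul, Complex.conj_conj]
  rw [fourierCoeff_congr_ae hconj, fourierCoeff_conj,
    hE.fourierCoeff_apply_single_eq_zero j i (by omega), map_zero]

theorem star_add_blaschke_smul_mul_self_eq_one {ι : Type} [Fintype ι] {lam : ℂ}
    (hlam : ‖lam‖ < 1) {D : Symbol ι} (hD : D.IsInner) {A B : V ι →L[ℂ] V ι}
    (hDAB : ∀ᵐ x ∂μ𝕋, D x = A + blaschke lam (circleCoord x) • B) {z : ℂ}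
    (hz : z ∈ Metric.sphere 0 1) :
    star (A + blaschke lam z • B) * (A + blaschke lam z • B) = 1 := by
  have hcont : Continuous fun x => A + blaschke lam (circleCoord x) • B :=
    continuous_const.add ((continuous_blaschke_circleCoord hlam).smul continuous_const)
  -- isometric a.e. on the circle, hence everywhere by continuity
  have hae : (fun x => ContinuousLinearMap.adjoint (A + blaschke lam (circleCoord x) • B) ∘L
      (A + blaschke lam (circleCoord x) • B)) =ᵐ[μ𝕋] fun _ => 1 := by
    filter_upwards [hD.2, hDAB] with x hx hxAB
    rwa [← hxAB]
  have hiso := (Continuous.ae_eq_iff_eq μ𝕋 ((ContinuousLinearMap.adjoint.continuous.comp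
    hcont).clm_comp hcont) continuous_const).mp hae
  obtain ⟨x, -, rfl⟩ := circleCoord_surjOn hz
  exact congrFun hiso x

/-- Lemma 2.3. Every inner divisor of `B_λ := b_λ I_n` is a
Blaschke–Potapov factor `ν (b_λ P + (I - P))` with `ν` a constant unitary and `P` an
orthogonal projection. -/
theorem statement7 (ι : Type) [Fintype ι] (lam : ℂ) (hlam : ‖lam‖ < 1)
    (D E : Symbol ι) (hD : D.IsInner) (hE : E.MemHinf)
    (hdiv : ∀ᵐ x ∂μ𝕋,
      (blaschke lam (circleCoord x)) • (1 : V ι →L[ℂ] V ι)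
        = (E.toFun x).comp (D.toFun x)) :
    ∃ ν : V ι →L[ℂ] V ι, ν ∈ unitary (V ι →L[ℂ] V ι) ∧
      ∃ P : V ι →L[ℂ] V ι, IsSelfAdjoint P ∧ P.comp P = P ∧
        ∀ᵐ x ∂μ𝕋,
          D.toFun x = ν.comp ((blaschke lam (circleCoord x)) • P + (1 - P)) := by
  obtain ⟨A, B, hDAB⟩ := exists_ae_eq_const_add_blaschke_smul hlam hD hE hdiv
  have hpencil : ∀ z ∈ Metric.sphere (0 : ℂ) 1, ‖blaschke lam z‖ = 1 ∧
      star (A + blaschke lam z • B) * (A + blaschke lam z • B) = 1 := fun z hz =>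
    ⟨norm_blaschke hlam (mem_sphere_zero_iff_norm.mp hz),
      star_add_blaschke_smul_mul_self_eq_one hlam hD hDAB hz⟩
  have h1 : (1 : ℂ) ∈ Metric.sphere 0 1 := by simp
  have hm1 : (-1 : ℂ) ∈ Metric.sphere 0 1 := by simp
  have hI : Complex.I ∈ Metric.sphere 0 1 := by simp
  have hb := blaschke_injOn hlam
  obtain ⟨hAB, hS⟩ := star_mul_eq_zero_of_isometry_pencil (hb.ne h1 hm1 (by norm_num))
    (hb.ne h1 hI (by simp [Complex.ext_iff])) (hb.ne hm1 hI (by simp [Complex.ext_iff]))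
    (by rintro w (rfl | rfl | rfl) <;> exact hpencil _ ‹_›)
  obtain ⟨ν, hν, P, hP, hPP, hform⟩ := exists_blaschkePotapov_of_star_mul_eq_zero hAB hS
  exact ⟨ν, hν, P, hP, hPP, hDAB.mono fun x hx => hx.trans (hform _)⟩

end BlockToeplitz
end
end

section
/- There is no hyponormal Toeplitz completion of the partial matrix [[T_z, ?],[?, T_{z̄}]]: for any φ, ψ ∈ L^∞, the block operator [[T_z, T_φ],[T_ψ, T_{z̄}]] on H² ⊕ H² is not hyponormal. -/
open MeasureTheory Complex Real InnerProductSpace Submodule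

set_option maxHeartbeats 1000000
set_option synthInstance.maxHeartbeats 200000

noncomputable section

namespace BlockToeplitz

/-- The Hilbert space `H² ⊕ H²` (with the ℓ²-product structure). -/
abbrev H2S2 : Type := WithLp 2 (H2S × H2S)

/-- The `2 × 2` block operator `[[T₁₁, T₁₂], [T₂₁, T₂₂]]` on `H² ⊕ H²`. -/
def block2 (T11 T12 T21 T22 : H2S →L[ℂ] H2S) : H2S2 →L[ℂ] H2S2 :=
  ((WithLp.prodContinuousLinearEquiv 2 ℂ H2S H2S).symm.toContinuousLinearMap).comp
    (((T11.coprod T12).prod (T21.coprod T22)).comp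
      ((WithLp.prodContinuousLinearEquiv 2 ℂ H2S H2S).toContinuousLinearMap))

/-!
If `T = [[T_z, T_φ], [T_ψ, T_z̄]]` is hyponormal, then `‖T* x‖ ≤ ‖T x‖`. Applied to `z^n x` with
`n → ∞`, this turns the Toeplitz operators into multiplication by their symbols; on the test
vectors `(z^j, t z^k)` all norms cancel and what remains says that the Fourier coefficients of
`φ + ψ̄` are `2`-periodic. Being square-summable, they vanish, so `φ = -ψ̄`. Now test on `(0, 1)`:
the `(2,2)` entry `T_z T_z̄ - 1` of the self-commutator gives `‖P ψ̄‖² + 1 ≤ ‖P ψ̄‖² + 0`.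
-/

open Filter Topology ContinuousLinearMap
open scoped ComplexConjugate

local notation "⟪" x ", " y "⟫" => @inner ℂ _ _ x y

local notation "𝐏" => Submodule.starProjection hardyS

theorem norm_add_smul_sq_of_norm_eq_one {E : Type*} [NormedAddCommGroup E]
    [InnerProductSpace ℂ E] (x y : E) {t : ℂ} (ht : ‖t‖ = 1) :
    ‖x + t • y‖ ^ 2 = ‖x‖ ^ 2 + 2 * (t * ⟪x, y⟫).re + ‖y‖ ^ 2 := by
  rw [norm_add_sq (𝕜 := ℂ), inner_smul_right, norm_smul, ht, one_mul]
  rfl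

theorem eq_zero_of_forall_re_mul_nonpos {d : ℂ}
    (h : ∀ t : ℂ, ‖t‖ = 1 → (t * d).re ≤ 0) : d = 0 := by
  have h₁ := h 1 (by simp)
  have h₂ := h (-1) (by simp)
  have h₃ := h I (by simp)
  have h₄ := h (-I) (by simp)
  simp only [one_mul, neg_mul, neg_re, mul_re, I_re, I_im, zero_mul, zero_sub] at h₁ h₂ h₃ h₄
  refine Complex.ext ?_ ?_ <;> simp only [zero_re, zero_im] <;> linarith

section Multiplication

theorem SymbolS.coeFn_mulLp (φ : SymbolS) (f : L2S) :
    ⇑(φ.mulLp f) =ᵐ[μ𝕋] fun x => φ x * f x := by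
  rw [SymbolS.mulLp, pointwiseCLM_apply]
  refine (MemLp.coeFn_toLp _).trans (Eventually.of_forall fun x => ?_)
  simp

theorem SymbolS.mulLp_congr {φ ψ : SymbolS} (h : φ.toFun = ψ.toFun) :
    φ.mulLp = ψ.mulLp := by
  ext1 f
  refine Lp.ext ?_
  filter_upwards [φ.coeFn_mulLp f, ψ.coeFn_mulLp f] with x hφ hψ
  rw [hφ, hψ]
  exact congrArg (· * f x) (congrFun h x)

theorem SymbolS.mulLp_comm (φ ψ : SymbolS) (f : L2S) :
    φ.mulLp (ψ.mulLp f) = ψ.mulLp (φ.mulLp f) := by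
  refine Lp.ext ?_
  filter_upwards [φ.coeFn_mulLp (ψ.mulLp f), ψ.coeFn_mulLp f, ψ.coeFn_mulLp (φ.mulLp f),
    φ.coeFn_mulLp f] with x h₁ h₂ h₃ h₄
  rw [h₁, h₂, h₃, h₄, mul_left_comm]

theorem SymbolS.inner_conj_mulLp (φ : SymbolS) (u v : L2S) :
    ⟪φ.conj.mulLp u, v⟫ = ⟪u, φ.mulLp v⟫ := by
  rw [L2.inner_def, L2.inner_def]
  refine integral_congr_ae ?_
  filter_upwards [φ.conj.coeFn_mulLp u, φ.coeFn_mulLp v] with x hu hv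
  simp only [hu, hv, RCLike.inner_apply]
  show v x * conj (conj (φ x) * u x) = φ x * v x * conj (u x)
  rw [map_mul, conj_conj]
  ring

def SymbolS.monomial (n : ℤ) : SymbolS where
  toFun := fun x => fourier n x
  meas := (map_continuous (fourier n)).aestronglyMeasurable
  bound := 1
  le_bound := fun x => (norm_fourier_apply n x).le

abbrev fourierL2 (m : ℤ) : L2S := fourierLp 2 m

theorem monomial_mulLp_fourierL2 (q m : ℤ) :
    (SymbolS.monomial q).mulLp (fourierL2 m) = fourierL2 (q + m) := by
  refine Lp.ext ?_
  filter_upwards [(SymbolS.monomial q).coeFn_mulLp (fourierL2 m), coeFn_fourierLp 2 m,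
    coeFn_fourierLp 2 (q + m)] with x h₁ h₂ h₃
  rw [h₁, h₂, h₃, fourier_add]
  rfl

theorem norm_monomial_mulLp (q : ℤ) (f : L2S) : ‖(SymbolS.monomial q).mulLp f‖ = ‖f‖ := by
  rw [Lp.norm_def, Lp.norm_def]
  congr 1
  refine eLpNorm_congr_norm_ae ?_
  filter_upwards [(SymbolS.monomial q).coeFn_mulLp f] with x hx
  rw [hx, norm_mul]
  exact congrArg (· * ‖f x‖) (norm_fourier_apply q x) |>.trans (one_mul _)

theorem monomial_zero_mulLp (f : L2S) : (SymbolS.monomial 0).mulLp f = f := by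
  refine Lp.ext ?_
  filter_upwards [(SymbolS.monomial 0).coeFn_mulLp f] with x hx
  rw [hx]
  exact congrArg (· * f x) (fourier_zero (x := x)) |>.trans (one_mul _)

def SymbolS.toL2 (φ : SymbolS) : L2S :=
  (MemLp.of_bound φ.meas φ.bound (Eventually.of_forall φ.le_bound)).toLp φ.toFun

theorem SymbolS.coeFn_toL2 (φ : SymbolS) : ⇑φ.toL2 =ᵐ[μ𝕋] φ.toFun :=
  MemLp.coeFn_toLp _

theorem SymbolS.mulLp_fourierL2 (φ : SymbolS) (m : ℤ) :
    φ.mulLp (fourierL2 m) = (SymbolS.monomial m).mulLp φ.toL2 := by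
  refine Lp.ext ?_
  filter_upwards [φ.coeFn_mulLp (fourierL2 m), (SymbolS.monomial m).coeFn_mulLp φ.toL2,
    coeFn_fourierLp 2 m, φ.coeFn_toL2] with x h₁ h₂ h₃ h₄
  rw [h₁, h₂, h₃, h₄, mul_comm]
  rfl

theorem SymbolS.norm_conj_toL2 (φ : SymbolS) : ‖φ.conj.toL2‖ = ‖φ.toL2‖ := by
  rw [Lp.norm_def, Lp.norm_def]
  congr 1
  refine eLpNorm_congr_norm_ae ?_
  filter_upwards [φ.conj.coeFn_toL2, φ.coeFn_toL2] with x h₁ h₂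
  rw [h₁, h₂]
  exact RCLike.norm_conj _

theorem inner_fourierL2_monomial_mulLp (m q : ℤ) (w : L2S) :
    ⟪fourierL2 m, (SymbolS.monomial q).mulLp w⟫ = ⟪fourierL2 (m - q), w⟫ := by
  rw [L2.inner_def, L2.inner_def]
  refine integral_congr_ae ?_
  filter_upwards [(SymbolS.monomial q).coeFn_mulLp w, coeFn_fourierLp 2 m,
    coeFn_fourierLp 2 (m - q)] with x h₁ h₂ h₃
  simp only [h₁, h₂, h₃, RCLike.inner_apply]
  show fourier q x * w x * conj (fourier m x) = w x * conj (fourier (m - q) x)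
  rw [← fourier_neg, ← fourier_neg, mul_right_comm, mul_comm, ← fourier_add, neg_sub,
    sub_eq_neg_add, add_comm]

theorem SymbolS.inner_fourierL2_conj_toL2 (φ : SymbolS) (m : ℤ) :
    ⟪fourierL2 m, φ.conj.toL2⟫ = conj ⟪fourierL2 (-m), φ.toL2⟫ := by
  rw [L2.inner_def, L2.inner_def, ← integral_conj]
  refine integral_congr_ae ?_
  filter_upwards [φ.conj.coeFn_toL2, φ.coeFn_toL2, coeFn_fourierLp 2 m,
    coeFn_fourierLp 2 (-m)] with x h₁ h₂ h₃ h₄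
  simp only [h₁, h₂, h₃, h₄, RCLike.inner_apply]
  show conj (φ x) * conj (fourier m x) = conj (φ x * conj (fourier (-m) x))
  rw [map_mul, ← fourier_neg, conj_conj]

theorem SymbolS.inner_monomial_mulLp_toL2 (φ : SymbolS) (q m : ℤ) :
    ⟪(SymbolS.monomial q).mulLp φ.toL2, fourierL2 m⟫ = ⟪fourierL2 (q - m), φ.conj.toL2⟫ := by
  rw [← inner_conj_symm, inner_fourierL2_monomial_mulLp, inner_fourierL2_conj_toL2, neg_sub]

theorem SymbolS.conj_conj (φ : SymbolS) : φ.conj.conj = φ := by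
  cases φ
  simp only [SymbolS.conj, RCLike.conj_conj]

end Multiplication

section Fourier

theorem orthonormal_fourierL2 : Orthonormal ℂ fourierL2 := by
  simpa only [coe_fourierBasis] using (fourierBasis (T := 2 * π)).orthonormal

theorem norm_fourierL2 (m : ℤ) : ‖fourierL2 m‖ = 1 := orthonormal_fourierL2.1 m

theorem eq_zero_of_forall_inner_fourierL2 {w : L2S} (h : ∀ m, ⟪fourierL2 m, w⟫ = 0) :
    w = 0 := by
  have hrepr : (fourierBasis (T := 2 * π)).repr w = 0 := by
    ext m
    simpa [HilbertBasis.repr_apply_apply, coe_fourierBasis] using h m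
  exact (fourierBasis (T := 2 * π)).repr.map_eq_zero_iff.mp hrepr

theorem eq_zero_of_inner_fourierL2_periodic {w : L2S}
    (h : ∀ m, ⟪fourierL2 (m - 1), w⟫ = ⟪fourierL2 (m + 1), w⟫) : w = 0 := by
  refine eq_zero_of_forall_inner_fourierL2 fun m => ?_
  have hconst : ∀ K : ℕ, ⟪fourierL2 (m + 2 * K), w⟫ = ⟪fourierL2 m, w⟫ := by
    intro K
    induction K with
    | zero => simp
    | succ K ih =>
      rw [← ih, ← add_sub_cancel_right (m + 2 * (K : ℤ)) 1, h]
      push_cast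
      ring_nf
  have hsum : Summable fun K : ℕ => ‖⟪fourierL2 (m + 2 * K), w⟫‖ ^ 2 :=
    (orthonormal_fourierL2.inner_products_summable (x := w)).comp_injective
      (fun a b hab => by simpa using hab)
  simp only [hconst, summable_const_iff] at hsum
  simpa using hsum

end Fourier

section Hardy

theorem mem_hardyS_iff {u : L2S} : u ∈ hardyS ↔ ∀ m < 0, ⟪fourierL2 m, u⟫ = 0 := by
  rw [hardyS, negSpanS, ← Submodule.span_singleton_le_iff_mem, ← Submodule.isOrtho_iff_le,
    Submodule.isOrtho_comm, Submodule.isOrtho_span]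
  simp only [Set.mem_ofPred_eq, Set.mem_singleton_iff, forall_eq]
  exact ⟨fun h m hm => h ⟨m, hm, rfl⟩, fun h v ⟨m, hm, hv⟩ => hv ▸ h m hm⟩

theorem fourierL2_mem_hardyS {m : ℤ} (hm : 0 ≤ m) : fourierL2 m ∈ hardyS :=
  mem_hardyS_iff.mpr fun k hk => orthonormal_fourierL2.2 (by omega)

theorem fourierL2_mem_orthogonal_hardyS {m : ℤ} (hm : m < 0) : fourierL2 m ∈ hardySᗮ :=
  Submodule.le_orthogonal_orthogonal negSpanS (Submodule.subset_span ⟨m, hm, rfl⟩)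

theorem monomial_mulLp_mem_hardyS {n : ℤ} (hn : 0 ≤ n) {u : L2S} (hu : u ∈ hardyS) :
    (SymbolS.monomial n).mulLp u ∈ hardyS := by
  refine mem_hardyS_iff.mpr fun m hm => ?_
  rw [inner_fourierL2_monomial_mulLp]
  exact mem_hardyS_iff.mp hu _ (by omega)

/-- Holds for trigonometric polynomials, which are dense in `L²`. -/
theorem tendsto_norm_orthogonal_starProjection_monomial_mulLp (w : L2S) :
    Tendsto (fun n : ℕ => ‖hardySᗮ.starProjection ((SymbolS.monomial n).mulLp w)‖) atTop
      (𝓝 0) := by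
  rw [Metric.tendsto_atTop]
  intro ε hε
  have hsum := (fourierBasis (T := 2 * π)).hasSum_repr w
  simp only [coe_fourierBasis] at hsum
  obtain ⟨F, hF⟩ := (hsum.eventually (Metric.ball_mem_nhds w hε)).exists
  obtain ⟨M, hM⟩ := (F.image Neg.neg).exists_le
  refine ⟨M.toNat, fun n hn => ?_⟩
  set s := ∑ i ∈ F, fourierBasis.repr w i • fourierL2 i
  have hs : (SymbolS.monomial n).mulLp s ∈ hardyS := by
    simp only [s, map_sum, map_smul, monomial_mulLp_fourierL2]
    refine Submodule.sum_mem _ fun i hi => Submodule.smul_mem _ _ (fourierL2_mem_hardyS ?_)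
    have hi' := hM (-i) (Finset.mem_image_of_mem _ hi)
    omega
  have hs' := (hardySᗮ.starProjection_apply_eq_zero_iff).mpr
    (Submodule.le_orthogonal_orthogonal hardyS hs)
  calc dist ‖hardySᗮ.starProjection ((SymbolS.monomial n).mulLp w)‖ 0
      = ‖hardySᗮ.starProjection ((SymbolS.monomial n).mulLp (w - s))‖ := by
        rw [dist_zero_right, norm_norm, map_sub, map_sub, hs', sub_zero]
    _ ≤ ‖w - s‖ :=
        (Submodule.norm_starProjection_apply_le _ _).trans_eq (norm_monomial_mulLp _ _)
    _ < ε := by rwa [← dist_eq_norm, dist_comm]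

theorem tendsto_norm_starProjection_monomial_mulLp_sq (w : L2S) :
    Tendsto (fun n : ℕ => ‖𝐏 ((SymbolS.monomial n).mulLp w)‖ ^ 2) atTop (𝓝 (‖w‖ ^ 2)) := by
  have hpyth : ∀ n : ℕ, ‖𝐏 ((SymbolS.monomial n).mulLp w)‖ ^ 2
      = ‖w‖ ^ 2 - ‖hardySᗮ.starProjection ((SymbolS.monomial n).mulLp w)‖ ^ 2 := by
    intro n
    have h := Submodule.norm_sq_eq_add_norm_sq_starProjection
      ((SymbolS.monomial n).mulLp w) hardyS
    rw [norm_monomial_mulLp] at h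
    linarith
  simp only [hpyth]
  simpa using tendsto_const_nhds.sub
    ((tendsto_norm_orthogonal_starProjection_monomial_mulLp w).pow 2)

end Hardy

section Block

theorem Hyponormal.norm_adjoint_apply_sq_le {H : Type*} [NormedAddCommGroup H]
    [InnerProductSpace ℂ H] [CompleteSpace H] {T : H →L[ℂ] H} (h : Hyponormal T) (x : H) :
    ‖adjoint T x‖ ^ 2 ≤ ‖T x‖ ^ 2 := by
  have hx := h.re_inner_nonneg_left x
  rw [sub_apply, comp_apply, comp_apply, inner_sub_left, map_sub, adjoint_inner_left T x,
    ← adjoint_inner_right T (adjoint T x), inner_self_eq_norm_sq, inner_self_eq_norm_sq] at hx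
  linarith

theorem toeplitzS_congr {φ ψ : SymbolS} (h : φ.toFun = ψ.toFun) :
    toeplitzS φ = toeplitzS ψ := by
  rw [toeplitzS, toeplitzS, SymbolS.mulLp_congr h]

theorem norm_toeplitzS_add (σ τ : SymbolS) (f g : H2S) :
    ‖toeplitzS σ f + toeplitzS τ g‖ = ‖𝐏 (σ.mulLp f + τ.mulLp g)‖ := by
  rw [map_add]
  rfl

theorem toeplitzS_adjoint (σ : SymbolS) : adjoint (toeplitzS σ) = toeplitzS σ.conj := by
  refine ((eq_adjoint_iff _ _).mpr fun f g => ?_).symm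
  calc ⟪𝐏 (σ.conj.mulLp f), (g : L2S)⟫
      = ⟪σ.conj.mulLp f, (g : L2S)⟫ := by
        rw [Submodule.inner_starProjection_left_eq_right,
          Submodule.starProjection_eq_self_iff.mpr g.2]
    _ = ⟪(f : L2S), σ.mulLp g⟫ := σ.inner_conj_mulLp f g
    _ = ⟪(f : L2S), 𝐏 (σ.mulLp g)⟫ := by
        rw [← Submodule.inner_starProjection_left_eq_right,
          Submodule.starProjection_eq_self_iff.mpr f.2]

theorem block2_adjoint (A B C D : H2S →L[ℂ] H2S) :
    adjoint (block2 A B C D) = block2 (adjoint A) (adjoint C) (adjoint B) (adjoint D) := by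
  refine ((eq_adjoint_iff _ _).mpr fun x y => ?_).symm
  show ⟪adjoint A x.fst + adjoint C x.snd, y.fst⟫ + ⟪adjoint B x.fst + adjoint D x.snd, y.snd⟫
      = ⟪x.fst, A y.fst + B y.snd⟫ + ⟪x.snd, C y.fst + D y.snd⟫
  simp only [inner_add_left, inner_add_right, adjoint_inner_left]
  ring

theorem norm_block2_apply_sq (A B C D : H2S →L[ℂ] H2S) (f g : H2S) :
    ‖block2 A B C D (WithLp.toLp 2 (f, g))‖ ^ 2 = ‖A f + B g‖ ^ 2 + ‖C f + D g‖ ^ 2 :=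
  WithLp.prod_norm_sq_eq_of_L2 _

def shiftCompletion (φ ψ : SymbolS) : H2S2 →L[ℂ] H2S2 :=
  block2 (toeplitzS shiftSymbolS) (toeplitzS φ) (toeplitzS ψ) (toeplitzS coshiftSymbolS)

theorem adjoint_shiftCompletion (φ ψ : SymbolS) :
    adjoint (shiftCompletion φ ψ) = block2 (toeplitzS coshiftSymbolS) (toeplitzS ψ.conj)
      (toeplitzS φ.conj) (toeplitzS shiftSymbolS) := by
  have hz : shiftSymbolS.conj.toFun = coshiftSymbolS.toFun :=
    funext fun x => (fourier_neg (n := 1)).symm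
  have hz' : coshiftSymbolS.conj.toFun = shiftSymbolS.toFun :=
    funext fun x => by
      show conj (fourier (-1) x) = fourier 1 x
      rw [fourier_neg, conj_conj]
  rw [shiftCompletion, block2_adjoint, toeplitzS_adjoint, toeplitzS_adjoint, toeplitzS_adjoint,
    toeplitzS_adjoint, toeplitzS_congr hz, toeplitzS_congr hz']

theorem Hyponormal.shiftCompletion_norm_le {φ ψ : SymbolS}
    (h : Hyponormal (shiftCompletion φ ψ)) {u v : L2S} (hu : u ∈ hardyS) (hv : v ∈ hardyS) :
    ‖𝐏 ((SymbolS.monomial (-1)).mulLp u + ψ.conj.mulLp v)‖ ^ 2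
        + ‖𝐏 (φ.conj.mulLp u + (SymbolS.monomial 1).mulLp v)‖ ^ 2
      ≤ ‖𝐏 ((SymbolS.monomial 1).mulLp u + φ.mulLp v)‖ ^ 2
        + ‖𝐏 (ψ.mulLp u + (SymbolS.monomial (-1)).mulLp v)‖ ^ 2 := by
  have hT := h.norm_adjoint_apply_sq_le (WithLp.toLp 2 (⟨u, hu⟩, ⟨v, hv⟩))
  rw [adjoint_shiftCompletion, shiftCompletion, norm_block2_apply_sq,
    norm_block2_apply_sq] at hT
  simp only [norm_toeplitzS_add] at hT
  rwa [SymbolS.mulLp_congr (φ := shiftSymbolS) (ψ := SymbolS.monomial 1) rfl,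
    SymbolS.mulLp_congr (φ := coshiftSymbolS) (ψ := SymbolS.monomial (-1)) rfl] at hT

end Block

section Symbol

variable {φ ψ : SymbolS}

theorem Hyponormal.shiftCompletion_symbol_norm_le (h : Hyponormal (shiftCompletion φ ψ))
    {a b : L2S} (ha : a ∈ hardyS) (hb : b ∈ hardyS) :
    ‖(SymbolS.monomial (-1)).mulLp a + ψ.conj.mulLp b‖ ^ 2
        + ‖φ.conj.mulLp a + (SymbolS.monomial 1).mulLp b‖ ^ 2
      ≤ ‖(SymbolS.monomial 1).mulLp a + φ.mulLp b‖ ^ 2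
        + ‖ψ.mulLp a + (SymbolS.monomial (-1)).mulLp b‖ ^ 2 := by
  have hshift : ∀ n : ℕ, ∀ (σ τ : SymbolS),
      σ.mulLp ((SymbolS.monomial n).mulLp a) + τ.mulLp ((SymbolS.monomial n).mulLp b)
        = (SymbolS.monomial n).mulLp (σ.mulLp a + τ.mulLp b) := by
    intro n σ τ
    rw [map_add, σ.mulLp_comm, τ.mulLp_comm]
  have hn : ∀ n : ℕ, _ := fun n : ℕ =>
    h.shiftCompletion_norm_le (monomial_mulLp_mem_hardyS n.cast_nonneg ha)
      (monomial_mulLp_mem_hardyS n.cast_nonneg hb)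
  simp only [hshift] at hn
  exact le_of_tendsto_of_tendsto'
    ((tendsto_norm_starProjection_monomial_mulLp_sq _).add
      (tendsto_norm_starProjection_monomial_mulLp_sq _))
    ((tendsto_norm_starProjection_monomial_mulLp_sq _).add
      (tendsto_norm_starProjection_monomial_mulLp_sq _)) hn

/-- Testing the symbol inequality on `(z^j, t z^k)` with `j - k = m`: all norms cancel, and the
cross terms are Fourier coefficients of `φ + ψ̄`. -/
theorem Hyponormal.re_mul_inner_fourierL2_sub_nonpos (h : Hyponormal (shiftCompletion φ ψ))
    (m : ℤ) {t : ℂ} (ht : ‖t‖ = 1) :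
    (t * (⟪fourierL2 (m - 1), φ.toL2 + ψ.conj.toL2⟫
      - ⟪fourierL2 (m + 1), φ.toL2 + ψ.conj.toL2⟫)).re ≤ 0 := by
  obtain ⟨j, k, hj, hk, rfl⟩ : ∃ j k : ℤ, 0 ≤ j ∧ 0 ≤ k ∧ m = j - k :=
    ⟨max m 0, max (-m) 0, le_max_right _ _, le_max_right _ _, by omega⟩
  have key := h.shiftCompletion_symbol_norm_le (fourierL2_mem_hardyS hj)
    (Submodule.smul_mem _ t (fourierL2_mem_hardyS hk))
  simp only [map_smul, monomial_mulLp_fourierL2] at key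
  simp only [SymbolS.mulLp_fourierL2, norm_add_smul_sq_of_norm_eq_one _ _ ht, norm_fourierL2,
    norm_monomial_mulLp, SymbolS.norm_conj_toL2, inner_fourierL2_monomial_mulLp,
    SymbolS.inner_monomial_mulLp_toL2, SymbolS.conj_conj] at key
  rw [show -1 + j - k = j - k - 1 by ring, show j - (1 + k) = j - k - 1 by ring,
    show 1 + j - k = j - k + 1 by ring, show j - (-1 + k) = j - k + 1 by ring] at key
  simp only [inner_add_right, mul_sub, mul_add, Complex.sub_re, Complex.add_re]
  linarith

theorem Hyponormal.toL2_add_conj_toL2_eq_zero (h : Hyponormal (shiftCompletion φ ψ)) :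
    φ.toL2 + ψ.conj.toL2 = 0 :=
  eq_zero_of_inner_fourierL2_periodic fun m => sub_eq_zero.mp <|
    eq_zero_of_forall_re_mul_nonpos fun _ ht => h.re_mul_inner_fourierL2_sub_nonpos m ht

end Symbol

/-- **Statement 19.** There is no hyponormal Toeplitz completion of
`[[T_z, ?], [?, T_z̄]]`: for any `φ, ψ ∈ L^∞` the block Toeplitz operator
`[[T_z, T_φ], [T_ψ, T_z̄]]` on `H² ⊕ H²` is not hyponormal. -/
theorem statement19 (φ ψ : SymbolS) :
    ¬ Hyponormal
        (block2 (toeplitzS shiftSymbolS) (toeplitzS φ) (toeplitzS ψ)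
          (toeplitzS coshiftSymbolS)) := by
  intro h
  have hφ : φ.toL2 = -ψ.conj.toL2 := eq_neg_of_add_eq_zero_left h.toL2_add_conj_toL2_eq_zero
  have key := h.shiftCompletion_norm_le hardyS.zero_mem (fourierL2_mem_hardyS le_rfl)
  simp only [map_zero, zero_add, add_zero, monomial_mulLp_fourierL2] at key
  simp only [SymbolS.mulLp_fourierL2, monomial_zero_mulLp, hφ, map_neg, norm_neg] at key
  rw [Submodule.starProjection_eq_self_iff.mpr (fourierL2_mem_hardyS zero_le_one),
    (Submodule.starProjection_apply_eq_zero_iff _).mpr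
      (fourierL2_mem_orthogonal_hardyS neg_one_lt_zero), norm_fourierL2, norm_zero] at key
  norm_num at key

end BlockToeplitz
end
end
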